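/- Let D = ((x_1,y_1),…,(x_n,y_n)) be a dataset of size n ≥ 1 with binary labels and 0-1 loss, f : X → Bool a fixed model, G a set of groups, H a set of models, and define Φ(g,h) := (1/n) Σ_{i=1}^n 1[g x_i = true]·(1[f x_i ≠ y_i] − 1[h x_i ≠ y_i]). Fix ε > 0 and let (g_0,h_0), (g_1,h_1), …, (g_T,h_T) ∈ G × H be a sequence such that for each 0 ≤ k < T: h_{k+1} maximizes Φ(g_k, ·) over H, g_{k+1} maximizes Φ(·, h_{k+1}) over G, and Φ(g_{k+1}, h_{k+1}) ≥ Φ(g_k, h_k) + ε. Then: (i) T ≤ 2/ε; and (ii) if T ≥ 1 and, for some h' maximizing Φ(g_T, ·) over H and some g' maximizing Φ(·, h') over G, one has Φ(g', h') < Φ(g_T, h_T) + ε, then for every h ∈ H, Φ(g_T, h) ≤ Φ(g_T, h_T) + ε, and for every g ∈ G, Φ(g, h_T) ≤ Φ(g_T, h_T). -/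

import Mathlib

/-- `Φ(g,h) = (1/n) Σ_i 1[g x_i]·(1[f x_i ≠ y_i] − 1[h x_i ≠ y_i])`, the (signed,
unnormalized) improvement of the model `h` over the fixed model `f` on the group `g`. -/
noncomputable def Phi {X : Type} {n : ℕ} (D : Fin n → X × Bool) (f : X → Bool)
    (g : X → Bool) (h : X → Bool) : ℝ :=
  (1 / n : ℝ) * ∑ i : Fin n,
    if g (D i).1 = true then
      (if f (D i).1 ≠ (D i).2 then (1 : ℝ) else 0)
        - (if h (D i).1 ≠ (D i).2 then (1 : ℝ) else 0)
    else 0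

/-!
Each step raises `Φ` by at least `ε`, so `Φ(g_T, h_T) ≥ Φ(g_0, h_0) + T ε`; as `Φ` takes
values in `[-1, 1]`, this forces `T ε ≤ 2`. At the end, `h'` maximizes `Φ(g_T, ·)` and
`Φ(g_T, h') ≤ Φ(g', h') < Φ(g_T, h_T) + ε`, while `g_T` maximizes `Φ(·, h_T)` by construction.
-/

lemma abs_Phi_le_one {X : Type} {n : ℕ} (D : Fin n → X × Bool) (f g h : X → Bool) :
    |Phi D f g h| ≤ 1 := by
  have hsum : |∑ i : Fin n,
      if g (D i).1 = true then
        (if f (D i).1 ≠ (D i).2 then (1 : ℝ) else 0)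
          - (if h (D i).1 ≠ (D i).2 then (1 : ℝ) else 0)
      else 0| ≤ n := by
    calc _ ≤ ∑ i : Fin n, |_| := Finset.abs_sum_le_sum_abs _ _
      _ ≤ ∑ _i : Fin n, (1 : ℝ) := Finset.sum_le_sum fun i _ => by split_ifs <;> simp
      _ = n := by simp
  rw [Phi, abs_mul, one_div, abs_inv, Nat.abs_cast]
  calc (n : ℝ)⁻¹ * _ ≤ (n : ℝ)⁻¹ * n := by gcongr
    _ ≤ 1 := inv_mul_le_one_of_le₀ le_rfl n.cast_nonneg

lemma add_mul_le_of_forall_add_le_succ {u : ℕ → ℝ} {ε : ℝ} {T : ℕ}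
    (hstep : ∀ k < T, u k + ε ≤ u (k + 1)) : ∀ k ≤ T, u 0 + k * ε ≤ u k := by
  intro k hk
  induction k with
  | zero => simp
  | succ m ih =>
    have := hstep m hk
    have := ih (m.le_succ.trans hk)
    push_cast
    linarith

lemma natCast_le_two_div_of_forall_add_le_succ {u : ℕ → ℝ} {ε : ℝ} {T : ℕ} (hε : 0 < ε)
    (hu₀ : |u 0| ≤ 1) (hu_T : |u T| ≤ 1) (hstep : ∀ k < T, u k + ε ≤ u (k + 1)) :
    (T : ℝ) ≤ 2 / ε := by
  have hgain := add_mul_le_of_forall_add_le_succ hstep T le_rfl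
  rw [abs_le] at hu₀ hu_T
  rw [le_div_iff₀ hε]
  linarith

theorem stmt_16_general {X : Type} (n : ℕ) (D : Fin n → X × Bool) (f : X → Bool)
    (G H : Set (X → Bool)) (ε : ℝ) (hε : 0 < ε) (T : ℕ)
    (gs hs : ℕ → X → Bool)
    (hmem : ∀ k ≤ T, gs k ∈ G ∧ hs k ∈ H)
    (hstep : ∀ k < T,
      (∀ h ∈ H, Phi D f (gs k) h ≤ Phi D f (gs k) (hs (k + 1))) ∧
      (∀ g ∈ G, Phi D f g (hs (k + 1)) ≤ Phi D f (gs (k + 1)) (hs (k + 1))) ∧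
      Phi D f (gs k) (hs k) + ε ≤ Phi D f (gs (k + 1)) (hs (k + 1))) :
    (T : ℝ) ≤ 2 / ε
    ∧ (1 ≤ T →
        ∀ h' : X → Bool, h' ∈ H → (∀ h ∈ H, Phi D f (gs T) h ≤ Phi D f (gs T) h') →
        ∀ g' : X → Bool, g' ∈ G → (∀ g ∈ G, Phi D f g h' ≤ Phi D f g' h') →
        Phi D f g' h' < Phi D f (gs T) (hs T) + ε →
        (∀ h ∈ H, Phi D f (gs T) h ≤ Phi D f (gs T) (hs T) + ε)
          ∧ (∀ g ∈ G, Phi D f g (hs T) ≤ Phi D f (gs T) (hs T))) := by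
  refine ⟨?_, fun hT h' _ hh'_max g' _ hg'_max hlt => ⟨?_, ?_⟩⟩
  · exact natCast_le_two_div_of_forall_add_le_succ (u := fun k => Phi D f (gs k) (hs k)) hε
      (abs_Phi_le_one D f _ _) (abs_Phi_le_one D f _ _) fun k hk => (hstep k hk).2.2
  · intro h hh
    calc Phi D f (gs T) h ≤ Phi D f (gs T) h' := hh'_max h hh
      _ ≤ Phi D f g' h' := hg'_max (gs T) (hmem T le_rfl).1
      _ ≤ Phi D f (gs T) (hs T) + ε := hlt.le
  · obtain ⟨m, rfl⟩ := Nat.exists_eq_add_of_le' hT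
    exact (hstep m m.lt_succ_self).2.1

/-- alternating maximization. If each step strictly improves `Φ` by at least
`ε`, then (i) `T ≤ 2/ε`; and (ii) at an `ε`-approximate local optimum (witnessed by
maximizers `h'` over `H` and `g'` over `G` with `Φ(g',h') < Φ(g_T,h_T) + ε`), no unilateral
change of `h` improves `Φ(g_T, ·)` by more than `ε`, and no unilateral change of `g`
improves `Φ(·, h_T)` at all. -/
theorem stmt_16 {X : Type} (n : ℕ) (hn : 1 ≤ n) (D : Fin n → X × Bool) (f : X → Bool)
    (G H : Set (X → Bool)) (ε : ℝ) (hε : 0 < ε) (T : ℕ)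
    (gs hs : ℕ → X → Bool)
    (hmem : ∀ k ≤ T, gs k ∈ G ∧ hs k ∈ H)
    (hstep : ∀ k < T,
      (∀ h ∈ H, Phi D f (gs k) h ≤ Phi D f (gs k) (hs (k + 1))) ∧
      (∀ g ∈ G, Phi D f g (hs (k + 1)) ≤ Phi D f (gs (k + 1)) (hs (k + 1))) ∧
      Phi D f (gs k) (hs k) + ε ≤ Phi D f (gs (k + 1)) (hs (k + 1))) :
    (T : ℝ) ≤ 2 / ε
    ∧ (1 ≤ T →
        ∀ h' : X → Bool, h' ∈ H → (∀ h ∈ H, Phi D f (gs T) h ≤ Phi D f (gs T) h') →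
        ∀ g' : X → Bool, g' ∈ G → (∀ g ∈ G, Phi D f g h' ≤ Phi D f g' h') →
        Phi D f g' h' < Phi D f (gs T) (hs T) + ε →
        (∀ h ∈ H, Phi D f (gs T) h ≤ Phi D f (gs T) (hs T) + ε)
          ∧ (∀ g ∈ G, Phi D f g (hs T) ≤ Phi D f (gs T) (hs T))) :=
  stmt_16_general n D f G H ε hε T gs hs hmem hstep
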